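/- arXiv:2312.05911 — 4 statements merged into one kernel-verified Lean document; each statement's English description precedes it below -/
import Mathlib

section
/- Let m ≥ 1 and let α, x, y ∈ ℝ^m have strictly positive entries. Then with d(a,b) := (a−b)²/(ab), one has d(∑_{k∈[m]} α_k x_k, ∑_{k∈[m]} α_k y_k) ≤ max_{k∈[m]} d(x_k, y_k). -/
/-! Since `d(a, b) = a / b + b / a - 2`, the sublevel set `{d ≤ M}` of positive pairs is cut out by
the quadratic inequality `a ^ 2 + b ^ 2 ≤ (2 + M) a b`. Together with `(0, 0)` this set is a convex
cone in `ℝ²`, so it contains `∑ α_k (x_k, y_k)` as soon as it contains every `(x_k, y_k)`. -/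

theorem div_mul_le_iff_sq_add_sq_le {a b M : ℝ} (ha : 0 < a) (hb : 0 < b) :
    (a - b) ^ 2 / (a * b) ≤ M ↔ a ^ 2 + b ^ 2 ≤ (2 + M) * (a * b) := by
  rw [div_le_iff₀ (mul_pos ha hb)]
  constructor <;> intro h <;> nlinarith

theorem two_mul_add_le_of_sq_add_sq_le {a b u v c : ℝ} (ha : 0 ≤ a) (hb : 0 ≤ b) (hu : 0 ≤ u)
    (hv : 0 ≤ v) (hab : a ^ 2 + b ^ 2 ≤ c * (a * b)) (huv : u ^ 2 + v ^ 2 ≤ c * (u * v)) :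
    2 * (a * u + b * v) ≤ c * (a * v + b * u) := by
  -- `a * u` times the goal is at least `(a * v - b * u) ^ 2`; if `a * u = 0`, the pair containing it is `0`.
  have key : (a * v - b * u) ^ 2 ≤ a * u * (c * (a * v + b * u) - 2 * (a * u + b * v)) := by
    nlinarith [mul_le_mul_of_nonneg_left huv (sq_nonneg a),
      mul_le_mul_of_nonneg_left hab (sq_nonneg u)]
  rcases (mul_nonneg ha hu).eq_or_lt with hau | hau
  · rcases mul_eq_zero.mp hau.symm with rfl | rfl
    · obtain rfl : b = 0 := by nlinarith
      simp
    · obtain rfl : v = 0 := by nlinarith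
      simp
  · nlinarith [sq_nonneg (a * v - b * u)]

def sqAddSqLeMulCone (c : ℝ) : PointedCone ℝ (ℝ × ℝ) where
  carrier := {p | 0 ≤ p.1 ∧ 0 ≤ p.2 ∧ p.1 ^ 2 + p.2 ^ 2 ≤ c * (p.1 * p.2)}
  zero_mem' := by simp
  add_mem' := by
    rintro p q ⟨hp₁, hp₂, hp⟩ ⟨hq₁, hq₂, hq⟩
    have := two_mul_add_le_of_sq_add_sq_le hp₁ hp₂ hq₁ hq₂ hp hq
    refine ⟨add_nonneg hp₁ hq₁, add_nonneg hp₂ hq₂, ?_⟩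
    change (p.1 + q.1) ^ 2 + (p.2 + q.2) ^ 2 ≤ c * ((p.1 + q.1) * (p.2 + q.2))
    nlinarith
  smul_mem' := by
    rintro ⟨t, ht⟩ p ⟨hp₁, hp₂, hp⟩
    refine ⟨mul_nonneg ht hp₁, mul_nonneg ht hp₂, ?_⟩
    change (t * p.1) ^ 2 + (t * p.2) ^ 2 ≤ c * (t * p.1 * (t * p.2))
    nlinarith [mul_le_mul_of_nonneg_left hp (sq_nonneg t)]

theorem mem_sqAddSqLeMulCone {c : ℝ} {p : ℝ × ℝ} :
    p ∈ sqAddSqLeMulCone c ↔ 0 ≤ p.1 ∧ 0 ≤ p.2 ∧ p.1 ^ 2 + p.2 ^ 2 ≤ c * (p.1 * p.2) :=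
  Iff.rfl

theorem sum_sq_add_sum_sq_le {ι : Type*} (s : Finset ι) (α x y : ι → ℝ) (c : ℝ)
    (hα : ∀ k ∈ s, 0 ≤ α k) (hx : ∀ k ∈ s, 0 ≤ x k) (hy : ∀ k ∈ s, 0 ≤ y k)
    (hxy : ∀ k ∈ s, x k ^ 2 + y k ^ 2 ≤ c * (x k * y k)) :
    (∑ k ∈ s, α k * x k) ^ 2 + (∑ k ∈ s, α k * y k) ^ 2 ≤
      c * ((∑ k ∈ s, α k * x k) * (∑ k ∈ s, α k * y k)) := by
  have hmem : ∑ k ∈ s, α k • (x k, y k) ∈ sqAddSqLeMulCone c :=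
    Submodule.sum_mem _ fun k hk =>
      Submodule.smul_mem _ (⟨α k, hα k hk⟩ : {t : ℝ // 0 ≤ t}) ⟨hx k hk, hy k hk, hxy k hk⟩
  simpa [Prod.fst_sum, Prod.snd_sum] using (mem_sqAddSqLeMulCone.mp hmem).2.2

theorem leave_one_out_d_sum (m : ℕ) (hm : 0 < m) (α x y : Fin m → ℝ)
    (hα : ∀ k, 0 < α k) (hx : ∀ k, 0 < x k) (hy : ∀ k, 0 < y k) :
    ((∑ k, α k * x k) - (∑ k, α k * y k)) ^ 2 /
        ((∑ k, α k * x k) * (∑ k, α k * y k)) ≤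
      Finset.univ.sup' (Finset.univ_nonempty_iff.mpr ⟨⟨0, hm⟩⟩)
        (fun k => (x k - y k) ^ 2 / (x k * y k)) := by
  have hne : (Finset.univ : Finset (Fin m)).Nonempty := Finset.univ_nonempty_iff.mpr ⟨⟨0, hm⟩⟩
  have hSx : 0 < ∑ k, α k * x k := Finset.sum_pos (fun k _ => mul_pos (hα k) (hx k)) hne
  have hSy : 0 < ∑ k, α k * y k := Finset.sum_pos (fun k _ => mul_pos (hα k) (hy k)) hne
  rw [div_mul_le_iff_sq_add_sq_le hSx hSy]
  refine sum_sq_add_sum_sq_le _ α x y _ (fun k _ => (hα k).le) (fun k _ => (hx k).le)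
    (fun k _ => (hy k).le) fun k _ => ?_
  exact (div_mul_le_iff_sq_add_sq_le (hx k) (hy k)).mp
    (Finset.le_sup' (fun k => (x k - y k) ^ 2 / (x k * y k)) (Finset.mem_univ k))
end

section
/- Let m ≥ 1, α, x, y ∈ ℝ^m with strictly positive entries, and d(a,b) := (a−b)²/(ab). Then |∑_i α_i x_i − ∑_j α_j y_j|² ≤ (max_{k∈[m]} d(x_k, y_k)) · (∑_i α_i x_i) · (∑_j α_j y_j). -/
open Finset

/-- Cauchy–Schwarz with `r i = α i (x i - y i)`, `f i = D α i x i`, `g i = α i y i`: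
the bound on `d(x i, y i)` is exactly `r i ^ 2 ≤ f i * g i`. -/
theorem sq_sum_mul_sub_sum_mul_le {ι R : Type*} [Field R] [LinearOrder R] [IsStrictOrderedRing R]
    (s : Finset ι) {α x y : ι → R} {D : R} (hα : ∀ i ∈ s, 0 ≤ α i) (hx : ∀ i ∈ s, 0 < x i)
    (hy : ∀ i ∈ s, 0 < y i) (hD : ∀ i ∈ s, (x i - y i) ^ 2 / (x i * y i) ≤ D) :
    (∑ i ∈ s, α i * x i - ∑ i ∈ s, α i * y i) ^ 2 ≤
      D * (∑ i ∈ s, α i * x i) * ∑ i ∈ s, α i * y i := by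
  have hsq (i) (hi : i ∈ s) : (x i - y i) ^ 2 ≤ D * (x i * y i) :=
    (div_le_iff₀ (mul_pos (hx i hi) (hy i hi))).1 (hD i hi)
  have hD₀ (i) (hi : i ∈ s) : 0 ≤ D :=
    (div_nonneg (sq_nonneg _) (mul_pos (hx i hi) (hy i hi)).le).trans (hD i hi)
  rw [← sum_sub_distrib, mul_sum s (fun i ↦ α i * x i) D]
  refine sum_sq_le_sum_mul_sum_of_sq_le_mul s
    (fun i hi ↦ mul_nonneg (hD₀ i hi) (mul_nonneg (hα i hi) (hx i hi).le))
    (fun i hi ↦ mul_nonneg (hα i hi) (hy i hi).le) fun i hi ↦ ?_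
  calc (α i * x i - α i * y i) ^ 2 = α i ^ 2 * (x i - y i) ^ 2 := by ring
    _ ≤ α i ^ 2 * (D * (x i * y i)) := by gcongr; exact hsq i hi
    _ = D * (α i * x i) * (α i * y i) := by ring

theorem leave_one_out_sum_sq_bound (m : ℕ) (hm : 0 < m) (α x y : Fin m → ℝ)
    (hα : ∀ k, 0 < α k) (hx : ∀ k, 0 < x k) (hy : ∀ k, 0 < y k) :
    |(∑ i, α i * x i) - (∑ j, α j * y j)| ^ 2 ≤
      (Finset.univ.sup' (Finset.univ_nonempty_iff.mpr ⟨⟨0, hm⟩⟩)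
          (fun k => (x k - y k) ^ 2 / (x k * y k))) *
        (∑ i, α i * x i) * (∑ j, α j * y j) := by
  rw [sq_abs]
  exact sq_sum_mul_sub_sum_mul_le univ (fun i _ ↦ (hα i).le) (fun i _ ↦ hx i) (fun i _ ↦ hy i)
    fun i _ ↦ le_sup' (fun k ↦ (x k - y k) ^ 2 / (x k * y k)) (mem_univ i)
end

section
/- Let Σ₁, Σ₂ ∈ ℝ^{t×t} be positive semi-definite symmetric matrices. Then ‖Σ₁^{1/2} − Σ₂^{1/2}‖_F² ≤ √t · ‖Σ₁ − Σ₂‖_F, where ‖·‖_F denotes the Frobenius norm and M^{1/2} denotes the unique positive semi-definite square root of M. -/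
/-- The Frobenius norm of a real square matrix. -/
noncomputable def frobNorm {t : ℕ} (M : Matrix (Fin t) (Fin t) ℝ) : ℝ :=
  Real.sqrt (∑ i, ∑ j, (M i j) ^ 2)

/-- The positive semidefinite square root of a positive semidefinite matrix (as in the older Mathlib). -/
noncomputable def Matrix.PosSemidef.sqrt {n 𝕜 : Type*} [Fintype n] [DecidableEq n] [RCLike 𝕜]
    [PartialOrder 𝕜] [StarOrderedRing 𝕜]
    {A : Matrix n n 𝕜} (hA : A.PosSemidef) : Matrix n n 𝕜 :=
  (hA.1.eigenvectorUnitary : Matrix n n 𝕜) *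
    Matrix.diagonal ((↑) ∘ (fun x => Real.sqrt x) ∘ hA.1.eigenvalues) *
    (star hA.1.eigenvectorUnitary : Matrix n n 𝕜)

open Matrix in
private lemma myMulC {t : ℕ} {U : Matrix (Fin t) (Fin t) ℝ} (hU : star U * U = 1)
    (f g : Fin t → ℝ) :
    (U * diagonal f * star U) * (U * diagonal g * star U)
      = U * diagonal (fun i => f i * g i) * star U := by
  have h : diagonal f * (star U * U) * diagonal g = diagonal (fun i => f i * g i) := by
    rw [hU, mul_one, diagonal_mul_diagonal]
  calc (U * diagonal f * star U) * (U * diagonal g * star U)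
      = U * (diagonal f * (star U * U) * diagonal g) * star U := by
        simp only [Matrix.mul_assoc]
    _ = U * diagonal (fun i => f i * g i) * star U := by rw [h]

open Matrix in
private lemma myTraceC {t : ℕ} {U : Matrix (Fin t) (Fin t) ℝ} (hU : star U * U = 1)
    (f : Fin t → ℝ) :
    trace (U * diagonal f * star U) = ∑ i, f i := by
  rw [trace_mul_comm, ← Matrix.mul_assoc, hU, one_mul, trace_diagonal]

open Matrix in
private lemma myPsdC {t : ℕ} {U : Matrix (Fin t) (Fin t) ℝ} (f : Fin t → ℝ)
    (hf : ∀ i, 0 ≤ f i) :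
    PosSemidef (U * diagonal f * star U) := by
  simpa [Matrix.star_eq_conjTranspose] using
    (Matrix.posSemidef_diagonal_iff.mpr hf).mul_mul_conjTranspose_same U

theorem Matrix.PosSemidef.sqrt_mul_self {t : ℕ} {A : Matrix (Fin t) (Fin t) ℝ}
    (hA : A.PosSemidef) : hA.sqrt * hA.sqrt = A := by
  have hU : star (hA.1.eigenvectorUnitary : Matrix (Fin t) (Fin t) ℝ) *
      (hA.1.eigenvectorUnitary : Matrix (Fin t) (Fin t) ℝ) = 1 :=
    Matrix.mem_unitaryGroup_iff'.mp hA.1.eigenvectorUnitary.2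
  unfold Matrix.PosSemidef.sqrt
  rw [myMulC hU]
  conv_rhs => rw [hA.1.spectral_theorem]
  have h : (fun i => ((RCLike.ofReal ∘ (fun x => Real.sqrt x) ∘ hA.1.eigenvalues) i : ℝ) *
      (RCLike.ofReal ∘ (fun x => Real.sqrt x) ∘ hA.1.eigenvalues) i) = RCLike.ofReal ∘ hA.1.eigenvalues := by
    funext i
    simp [Real.mul_self_sqrt (hA.eigenvalues_nonneg i)]
  rw [h, Unitary.conjStarAlgAut_apply]

theorem Matrix.PosSemidef.posSemidef_sqrt {t : ℕ} {A : Matrix (Fin t) (Fin t) ℝ}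
    (hA : A.PosSemidef) : hA.sqrt.PosSemidef :=
  myPsdC _ fun _ => Real.sqrt_nonneg _

open Matrix in
private lemma myHermC {t : ℕ} (U : Matrix (Fin t) (Fin t) ℝ) (f : Fin t → ℝ) :
    (U * diagonal f * star U).IsHermitian := by
  show (U * diagonal f * star U)ᴴ = _
  simp [Matrix.conjTranspose_mul, Matrix.star_eq_conjTranspose, Matrix.mul_assoc,
    Matrix.diagonal_conjTranspose]

open Matrix in
private lemma myNegC {t : ℕ} (U : Matrix (Fin t) (Fin t) ℝ) (f : Fin t → ℝ) :
    -(U * diagonal f * star U) = U * diagonal (fun i => -(f i)) * star U := by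
  rw [← Matrix.diagonal_neg, Matrix.mul_neg, Matrix.neg_mul]

open Matrix in
private lemma mySubC {t : ℕ} (U : Matrix (Fin t) (Fin t) ℝ) (f g : Fin t → ℝ) :
    (U * diagonal f * star U) - (U * diagonal g * star U)
      = U * diagonal (fun i => f i - g i) * star U := by
  rw [← Matrix.diagonal_sub, Matrix.mul_sub, Matrix.sub_mul]

open Matrix in
private lemma myTraceNonneg {t : ℕ} {M : Matrix (Fin t) (Fin t) ℝ} (hM : PosSemidef M) :
    0 ≤ trace M := by
  rw [Matrix.trace]
  refine Finset.sum_nonneg fun i _ => ?_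
  have := hM.dotProduct_mulVec_nonneg (Pi.single i 1)
  simpa [dotProduct, Matrix.mulVec, Pi.single_apply, Finset.sum_ite_eq,
    Matrix.diag] using this

open Matrix in
private lemma myTraceMulNonneg {t : ℕ} {M N : Matrix (Fin t) (Fin t) ℝ}
    (hM : PosSemidef M) (hN : PosSemidef N) : 0 ≤ trace (M * N) := by
  have h1 : M * N = hM.sqrt * (hM.sqrt * N) := by
    rw [← Matrix.mul_assoc, hM.sqrt_mul_self]
  rw [h1, trace_mul_comm, Matrix.mul_assoc]
  have h2 : hM.sqrt * N * hM.sqrt = hM.sqrt * N * (hM.sqrt)ᴴ := by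
    rw [hM.posSemidef_sqrt.1]
  rw [← Matrix.mul_assoc, h2]
  exact myTraceNonneg (hN.mul_mul_conjTranspose_same hM.sqrt)

open Matrix in
private lemma myCS {t : ℕ} (M N : Matrix (Fin t) (Fin t) ℝ) :
    trace (M * N) ≤ Real.sqrt (∑ i, ∑ j, (M i j) ^ 2) * Real.sqrt (∑ i, ∑ j, (N i j) ^ 2) := by
  have h : trace (M * N) = ∑ p : Fin t × Fin t, M p.1 p.2 * N p.2 p.1 := by
    rw [Fintype.sum_prod_type]
    simp [Matrix.trace, Matrix.mul_apply, Matrix.diag]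
  have hsq := Finset.sum_mul_sq_le_sq_mul_sq Finset.univ
    (fun p : Fin t × Fin t => M p.1 p.2) (fun p => N p.2 p.1)
  have h1 : trace (M * N) ≤ Real.sqrt ((∑ p : Fin t × Fin t, M p.1 p.2 ^ 2) *
      ∑ p : Fin t × Fin t, N p.2 p.1 ^ 2) := by
    rw [h]
    calc (∑ p : Fin t × Fin t, M p.1 p.2 * N p.2 p.1)
        ≤ |∑ p : Fin t × Fin t, M p.1 p.2 * N p.2 p.1| := le_abs_self _
      _ = Real.sqrt ((∑ p : Fin t × Fin t, M p.1 p.2 * N p.2 p.1) ^ 2) :=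
          (Real.sqrt_sq_eq_abs _).symm
      _ ≤ _ := Real.sqrt_le_sqrt hsq
  refine h1.trans_eq ?_
  rw [Real.sqrt_mul (Finset.sum_nonneg fun _ _ => sq_nonneg _)]
  congr 1
  · rw [Fintype.sum_prod_type]
  · congr 1
    rw [← Equiv.sum_comp (Equiv.prodComm (Fin t) (Fin t))]
    rw [Fintype.sum_prod_type]
    rfl

open Matrix in
private lemma mySumSq {t : ℕ} {M : Matrix (Fin t) (Fin t) ℝ} (h : M.IsHermitian) :
    ∑ i, ∑ j, (M i j) ^ 2 = Matrix.trace (M * M) := by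
  rw [Matrix.trace]
  simp only [Matrix.diag, Matrix.mul_apply]
  refine Finset.sum_congr rfl fun i _ => Finset.sum_congr rfl fun j _ => ?_
  have h2 : M j i = M i j := by have := h.apply i j; simpa using this
  rw [sq, h2]

theorem frobNorm_sqrt_sub_sqrt_sq_le' (t : ℕ) (S₁ S₂ : Matrix (Fin t) (Fin t) ℝ)
    (h₁ : S₁.PosSemidef) (h₂ : S₂.PosSemidef) :
    (Real.sqrt (∑ i, ∑ j, ((h₁.sqrt - h₂.sqrt) i j) ^ 2)) ^ 2
      ≤ Real.sqrt t * Real.sqrt (∑ i, ∑ j, ((S₁ - S₂) i j) ^ 2) := by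
  classical
  set A := h₁.sqrt with hAdef
  set B := h₂.sqrt with hBdef
  have hA : A.PosSemidef := h₁.posSemidef_sqrt
  have hB : B.PosSemidef := h₂.posSemidef_sqrt
  have hS : (A - B).IsHermitian := hA.1.sub hB.1
  set U : Matrix (Fin t) (Fin t) ℝ := (hS.eigenvectorUnitary : Matrix (Fin t) (Fin t) ℝ)
    with hUdef
  have hU : star U * U = 1 := Matrix.mem_unitaryGroup_iff'.mp hS.eigenvectorUnitary.2
  set μ : Fin t → ℝ := hS.eigenvalues with hμdef
  have hspec : A - B = U * Matrix.diagonal μ * star U := by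
    simpa [Unitary.conjStarAlgAut_apply] using hS.spectral_theorem
  set p : Fin t → ℝ := fun i => if 0 < μ i then 1 else 0 with hpdef
  set m : Fin t → ℝ := fun i => if μ i < 0 then 1 else 0 with hmdef
  set Sp := U * Matrix.diagonal (fun i => μ i * p i) * star U with hSpdef
  set Sm := U * Matrix.diagonal (fun i => -(μ i * m i)) * star U with hSmdef
  set Pp := U * Matrix.diagonal p * star U with hPpdef
  set Pm := U * Matrix.diagonal m * star U with hPmdef
  have hSpPSD : Sp.PosSemidef := by
    refine myPsdC _ fun i => ?_
    rw [hpdef]; dsimp only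
    split_ifs with h
    · simpa using le_of_lt h
    · simp
  have hSmPSD : Sm.PosSemidef := by
    refine myPsdC _ fun i => ?_
    rw [hmdef]; dsimp only
    split_ifs with h
    · simpa using le_of_lt h
    · simp
  -- key multiplication identities
  have tSPp : (A - B) * Pp = Sp := by rw [hspec, hPpdef, myMulC hU, hSpdef]
  have tPpS : Pp * (A - B) = Sp := by
    have h : (fun i => p i * μ i) = fun i => μ i * p i := by funext i; ring
    rw [hspec, hPpdef, myMulC hU, h, hSpdef]
  have tSPm : (A - B) * Pm = -Sm := by
    have h : (fun i => - -(μ i * m i)) = fun i => μ i * m i := by funext i; ring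
    rw [hspec, hPmdef, myMulC hU, hSmdef, myNegC, h]
  have tPmS : Pm * (A - B) = -Sm := by
    have h : (fun i => - -(μ i * m i)) = fun i => m i * μ i := by funext i; ring
    rw [hspec, hPmdef, myMulC hU, hSmdef, myNegC, h]
  have tSS : (A - B) * (A - B) = U * Matrix.diagonal (fun i => μ i * μ i) * star U := by
    rw [hspec, myMulC hU]
  -- decompositions of S₁ - S₂
  have hAA : A * A = S₁ := h₁.sqrt_mul_self
  have hBB : B * B = S₂ := h₂.sqrt_mul_self
  have hD1 : S₁ - S₂ = (A - B) * B + B * (A - B) + (A - B) * (A - B) := by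
    rw [← hAA, ← hBB]; noncomm_ring
  have hD2 : S₁ - S₂ = A * (A - B) + (A - B) * A - (A - B) * (A - B) := by
    rw [← hAA, ← hBB]; noncomm_ring
  -- trace computations
  have tDPp : Matrix.trace ((S₁ - S₂) * Pp)
      = 2 * Matrix.trace (B * Sp) + ∑ i, μ i ^ 2 * p i := by
    rw [hD1, Matrix.add_mul, Matrix.add_mul, Matrix.trace_add, Matrix.trace_add]
    have e1 : Matrix.trace ((A - B) * B * Pp) = Matrix.trace (B * Sp) := by
      rw [Matrix.mul_assoc, Matrix.trace_mul_comm, Matrix.mul_assoc, tPpS]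
    have e2 : Matrix.trace (B * (A - B) * Pp) = Matrix.trace (B * Sp) := by
      rw [Matrix.mul_assoc, tSPp]
    have e3 : Matrix.trace ((A - B) * (A - B) * Pp) = ∑ i, μ i ^ 2 * p i := by
      rw [tSS, hPpdef, myMulC hU, myTraceC hU]
      exact Finset.sum_congr rfl fun i _ => by ring
    rw [e1, e2, e3]; ring
  have tDPm : Matrix.trace ((S₁ - S₂) * Pm)
      = -(2 * Matrix.trace (A * Sm)) - ∑ i, μ i ^ 2 * m i := by
    rw [hD2, Matrix.sub_mul, Matrix.add_mul, Matrix.trace_sub, Matrix.trace_add]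
    have e1 : Matrix.trace (A * (A - B) * Pm) = -Matrix.trace (A * Sm) := by
      rw [Matrix.mul_assoc, tSPm, Matrix.mul_neg, Matrix.trace_neg]
    have e2 : Matrix.trace ((A - B) * A * Pm) = -Matrix.trace (A * Sm) := by
      rw [Matrix.mul_assoc, Matrix.trace_mul_comm, Matrix.mul_assoc, tPmS,
        Matrix.mul_neg, Matrix.trace_neg]
    have e3 : Matrix.trace ((A - B) * (A - B) * Pm) = ∑ i, μ i ^ 2 * m i := by
      rw [tSS, hPmdef, myMulC hU, myTraceC hU]
      exact Finset.sum_congr rfl fun i _ => by ring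
    rw [e1, e2, e3]; ring
  -- the difference of projections
  set E := Pp - Pm with hEdef
  have tDE : Matrix.trace ((S₁ - S₂) * E)
      = 2 * Matrix.trace (B * Sp) + 2 * Matrix.trace (A * Sm)
        + (∑ i, μ i ^ 2 * p i + ∑ i, μ i ^ 2 * m i) := by
    rw [hEdef, Matrix.mul_sub, Matrix.trace_sub, tDPp, tDPm]; ring
  have hsum : ∑ i, μ i ^ 2 * p i + ∑ i, μ i ^ 2 * m i = ∑ i, μ i ^ 2 := by
    rw [← Finset.sum_add_distrib]
    refine Finset.sum_congr rfl fun i _ => ?_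
    rw [hpdef, hmdef]; dsimp only
    rcases lt_trichotomy (μ i) 0 with h | h | h
    · rw [if_neg (by linarith), if_pos h]; ring
    · rw [h]; norm_num
    · rw [if_pos h, if_neg (by linarith)]; ring
  -- lower bound : trace(S²) ≤ trace((S₁-S₂)E)
  have hLB : ∑ i, μ i ^ 2 ≤ Matrix.trace ((S₁ - S₂) * E) := by
    rw [tDE, hsum]
    have n1 : 0 ≤ Matrix.trace (B * Sp) := myTraceMulNonneg hB hSpPSD
    have n2 : 0 ≤ Matrix.trace (A * Sm) := myTraceMulNonneg hA hSmPSD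
    linarith
  -- LHS equals ∑ μ²
  have hLHS : (Real.sqrt (∑ i, ∑ j, ((A - B) i j) ^ 2)) ^ 2 = ∑ i, μ i ^ 2 := by
    rw [Real.sq_sqrt (Finset.sum_nonneg fun i _ => Finset.sum_nonneg fun j _ => sq_nonneg ((A - B) i j))]
    rw [mySumSq hS, tSS, myTraceC hU]
    exact Finset.sum_congr rfl fun i _ => (pow_two (μ i)).symm
  -- bound on ‖E‖_F
  have hE2 : ∑ i, ∑ j, (E i j) ^ 2 ≤ (t : ℝ) := by
    have hEherm : E.IsHermitian := (myHermC U p).sub (myHermC U m)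
    rw [mySumSq hEherm, hEdef, hPpdef, hPmdef, mySubC, myMulC hU, myTraceC hU]
    calc (∑ i, (p i - m i) * (p i - m i)) ≤ ∑ _i : Fin t, (1 : ℝ) := by
          refine Finset.sum_le_sum fun i _ => ?_
          rw [hpdef, hmdef]; dsimp only
          rcases lt_trichotomy (μ i) 0 with h | h | h
          · rw [if_neg (by linarith), if_pos h]; norm_num
          · rw [h]; norm_num
          · rw [if_pos h, if_neg (by linarith)]; norm_num
      _ = (t : ℝ) := by simp
  -- finish
  rw [hLHS]
  calc (∑ i, μ i ^ 2) ≤ Matrix.trace ((S₁ - S₂) * E) := hLB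
    _ ≤ Real.sqrt (∑ i, ∑ j, ((S₁ - S₂) i j) ^ 2) * Real.sqrt (∑ i, ∑ j, (E i j) ^ 2) :=
        myCS _ _
    _ ≤ Real.sqrt (∑ i, ∑ j, ((S₁ - S₂) i j) ^ 2) * Real.sqrt t := by
        exact mul_le_mul_of_nonneg_left (Real.sqrt_le_sqrt hE2) (Real.sqrt_nonneg _)
    _ = Real.sqrt t * Real.sqrt (∑ i, ∑ j, ((S₁ - S₂) i j) ^ 2) := mul_comm _ _

theorem frobNorm_sqrt_sub_sqrt_sq_le (t : ℕ) (S₁ S₂ : Matrix (Fin t) (Fin t) ℝ)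
    (h₁ : S₁.PosSemidef) (h₂ : S₂.PosSemidef) :
    (frobNorm (h₁.sqrt - h₂.sqrt)) ^ 2 ≤ Real.sqrt t * frobNorm (S₁ - S₂) := by
  exact frobNorm_sqrt_sub_sqrt_sq_le' t S₁ S₂ h₁ h₂
end

section
/- Let m, n ≥ 1, let 𝒱 ∈ ℝ^{m×n} have nonnegative entries with every row and every column containing a strictly positive entry, and let λ > 0. Suppose b ∈ [0,1)^m and τ_b := (𝒱ᵀ(1_m − b))⁻¹ (entrywise reciprocal, which is well-defined and has strictly positive entries) together satisfy b_k/(1 − b_k) = ∑_{ℓ∈[n]} 𝒱_{kℓ} · τ_{b,ℓ}/(1 + λ τ_{b,ℓ}) for every k ∈ [m]. Then max_{k∈[m]} b_k ≤ (1 + λ / max_{k∈[m]} ∑_ℓ 𝒱_{kℓ})⁻¹. -/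
/-!
Since `τ ≥ 0`, each summand `τ_ℓ / (1 + λ τ_ℓ)` is at most `λ⁻¹`, so the fixed-point equation gives
`b_k / (1 - b_k) ≤ (∑_ℓ 𝒱_{kℓ}) / λ ≤ S / λ` with `S` the largest row sum. Solving for `b_k`
yields `b_k ≤ S / (S + λ) = (1 + λ / S)⁻¹`.
-/

open Finset

lemma div_one_add_mul_le_inv {t lam : ℝ} (ht : 0 ≤ t) (hlam : 0 < lam) :
    t / (1 + lam * t) ≤ lam⁻¹ := by
  rw [div_le_iff₀ (by positivity), mul_add, inv_mul_cancel_left₀ hlam.ne']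
  linarith [inv_pos.2 hlam]

/-- At `s = 0` the right-hand side is the junk value `(1 + lam / 0)⁻¹ = 1`. -/
lemma le_inv_one_add_div_of_div_one_sub_le {x s lam : ℝ} (hx : x < 1) (hs : 0 ≤ s)
    (hlam : 0 < lam) (h : x / (1 - x) ≤ s / lam) : x ≤ (1 + lam / s)⁻¹ := by
  have hx' : 0 < 1 - x := sub_pos.2 hx
  rcases hs.eq_or_lt with rfl | hs
  · rw [zero_div, div_nonpos_iff] at h
    rw [div_zero, add_zero, inv_one]
    rcases h with ⟨-, h⟩ | ⟨h, -⟩ <;> linarith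
  · rw [div_le_div_iff₀ hx' hlam] at h
    rw [show (1 + lam / s)⁻¹ = s / (s + lam) by field_simp, le_div_iff₀ (by positivity)]
    linarith

lemma inv_sum_mul_one_sub_nonneg {ι κ : Type*} [Fintype ι] {V : Matrix ι κ ℝ} {b : ι → ℝ}
    (hV : ∀ k ℓ, 0 ≤ V k ℓ) (hb : ∀ k, b k ≤ 1) (ℓ : κ) :
    0 ≤ (∑ k, V k ℓ * (1 - b k))⁻¹ :=
  inv_nonneg.2 <| sum_nonneg fun k _ => mul_nonneg (hV k ℓ) (sub_nonneg.2 (hb k))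

lemma div_one_sub_le_rowSum_div_of_fixedPoint {ι κ : Type*} [Fintype κ] {V : Matrix ι κ ℝ}
    {b : ι → ℝ} {τ : κ → ℝ} (hV : ∀ k ℓ, 0 ≤ V k ℓ) {lam : ℝ} (hlam : 0 < lam)
    (hτ : ∀ ℓ, 0 ≤ τ ℓ)
    {k : ι} (hfix : b k / (1 - b k) = ∑ ℓ, V k ℓ * (τ ℓ / (1 + lam * τ ℓ))) :
    b k / (1 - b k) ≤ (∑ ℓ, V k ℓ) / lam := by
  calc b k / (1 - b k) = ∑ ℓ, V k ℓ * (τ ℓ / (1 + lam * τ ℓ)) := hfix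
    _ ≤ ∑ ℓ, V k ℓ * lam⁻¹ := sum_le_sum fun ℓ _ =>
        mul_le_mul_of_nonneg_left (div_one_add_mul_le_inv (hτ ℓ) hlam) (hV k ℓ)
    _ = (∑ ℓ, V k ℓ) / lam := by rw [← sum_mul, div_eq_mul_inv]

theorem onsager_fixed_point_bound_general (m n : ℕ) (hm : 0 < m)
    (V : Matrix (Fin m) (Fin n) ℝ) (hV : ∀ k ℓ, 0 ≤ V k ℓ)
    (lam : ℝ) (hlam : 0 < lam)
    (b : Fin m → ℝ) (hb : ∀ k, b k ∈ Set.Ico (0 : ℝ) 1)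
    (τ : Fin n → ℝ) (hτ : ∀ ℓ, τ ℓ = (∑ k, V k ℓ * (1 - b k))⁻¹)
    (hfix : ∀ k, b k / (1 - b k) = ∑ ℓ, V k ℓ * (τ ℓ / (1 + lam * τ ℓ))) :
    Finset.univ.sup' (Finset.univ_nonempty_iff.mpr ⟨⟨0, hm⟩⟩) b ≤
      (1 + lam / Finset.univ.sup' (Finset.univ_nonempty_iff.mpr ⟨⟨0, hm⟩⟩)
          (fun k => ∑ ℓ, V k ℓ))⁻¹ := by
  set S := univ.sup' (univ_nonempty_iff.mpr ⟨⟨0, hm⟩⟩) fun k => ∑ ℓ, V k ℓ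
  have hrow_le : ∀ k, ∑ ℓ, V k ℓ ≤ S := fun k => le_sup' (fun k => ∑ ℓ, V k ℓ) (mem_univ k)
  have hS : 0 ≤ S := (sum_nonneg fun ℓ _ => hV ⟨0, hm⟩ ℓ).trans (hrow_le _)
  have hτ_nonneg : ∀ ℓ, 0 ≤ τ ℓ := fun ℓ =>
    hτ ℓ ▸ inv_sum_mul_one_sub_nonneg hV (fun k => (hb k).2.le) ℓ
  refine sup'_le _ _ fun k _ => le_inv_one_add_div_of_div_one_sub_le (hb k).2 hS hlam ?_
  calc b k / (1 - b k) ≤ (∑ ℓ, V k ℓ) / lam :=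
        div_one_sub_le_rowSum_div_of_fixedPoint hV hlam hτ_nonneg (hfix k)
    _ ≤ S / lam := by gcongr; exact hrow_le k

theorem onsager_fixed_point_bound (m n : ℕ) (hm : 0 < m) (hn : 0 < n)
    (V : Matrix (Fin m) (Fin n) ℝ) (hV : ∀ k ℓ, 0 ≤ V k ℓ)
    (hrowpos : ∀ k, ∃ ℓ, 0 < V k ℓ) (hcolpos : ∀ ℓ, ∃ k, 0 < V k ℓ)
    (lam : ℝ) (hlam : 0 < lam)
    (b : Fin m → ℝ) (hb : ∀ k, b k ∈ Set.Ico (0 : ℝ) 1)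
    (τ : Fin n → ℝ) (hτ : ∀ ℓ, τ ℓ = (∑ k, V k ℓ * (1 - b k))⁻¹)
    (hfix : ∀ k, b k / (1 - b k) = ∑ ℓ, V k ℓ * (τ ℓ / (1 + lam * τ ℓ))) :
    Finset.univ.sup' (Finset.univ_nonempty_iff.mpr ⟨⟨0, hm⟩⟩) b ≤
      (1 + lam / Finset.univ.sup' (Finset.univ_nonempty_iff.mpr ⟨⟨0, hm⟩⟩)
          (fun k => ∑ ℓ, V k ℓ))⁻¹ :=
  onsager_fixed_point_bound_general m n hm V hV lam hlam b hb τ hτ hfix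
end
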